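/- arXiv:2004.01659 — 3 statements merged into one kernel-verified Lean document; each statement's English description precedes it below -/
import Mathlib

section
/- For any permutation π of {1,...,n} and positive integers k and l, the binomial identity C(kl+n-des(π)-1, n) = Σ_{στ=π} C(k+n-des(σ)-1, n)·C(l+n-des(τ)-1, n) holds, where the sum is over all pairs of permutations σ, τ in S_n with στ = π. -/
/-- The value of the permutation at position `j` (1-indexed), shifted by 1,
with the convention that out-of-range positions (in particular `j = 0`) give `0`. -/
def pval {n : ℕ} (π : Equiv.Perm (Fin n)) (j : ℕ) : ℕ :=
  if h : 1 ≤ j ∧ j ≤ n then ((π ⟨j - 1, by omega⟩ : Fin n) : ℕ) + 1 else 0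

/-- Number of descents of `π`: indices `i ∈ {1,…,n-1}` with `π(i) > π(i+1)`. -/
def des {n : ℕ} (π : Equiv.Perm (Fin n)) : ℕ :=
  ((Finset.Icc 1 (n - 1)).filter (fun i => pval π (i + 1) < pval π i)).card

/-- Number of left peaks of `π`: indices `i ∈ {1,…,n-1}` with
`π(i-1) < π(i) > π(i+1)`, with the convention `π(0) = 0`. -/
def lpk {n : ℕ} (π : Equiv.Perm (Fin n)) : ℕ :=
  ((Finset.Icc 1 (n - 1)).filter
    (fun i => pval π (i - 1) < pval π i ∧ pval π (i + 1) < pval π i)).card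

/-- Number of interior peaks of `π`: indices `i ∈ {2,…,n-1}` with
`π(i-1) < π(i) > π(i+1)`. -/
def pk {n : ℕ} (π : Equiv.Perm (Fin n)) : ℕ :=
  ((Finset.Icc 2 (n - 1)).filter
    (fun i => pval π (i - 1) < pval π i ∧ pval π (i + 1) < pval π i)).card

/-!
Both sides count words `F : Fin n → Fin (k * l)` whose stable sorting permutation is `π`.

A word `w : Fin n → Fin m` is stably sorted by `σ` iff `w ∘ σ` is weakly increasing and strictly
increasing at the descents of `σ`; adding to `(w ∘ σ) i` the number of non-descents before `i`
turns these words into the strictly increasing words `Fin n → Fin (m + n - 1 - des σ)`, so there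
are `C(m + n - des σ - 1, n)` of them.

Writing `F = k * B + A` with `A : Fin n → Fin k` and `B : Fin n → Fin l`, radix sort gives
`sort F = sort A * sort (B ∘ sort A)`. Since `(A, B) ↦ (A, B ∘ sort A)` is a bijection, grouping
the words `F` by `σ = sort A` yields the sum over `σ * τ = π`.
-/

open Finset

namespace Tuple

variable {n : ℕ} {α β : Type*} [LinearOrder α] [LinearOrder β]

theorem sort_eq_iff_strictMono {f : Fin n → α} {σ : Equiv.Perm (Fin n)} :
    sort f = σ ↔ StrictMono fun i ↦ toLex (f (σ i), σ i) :=
  eq_comm.trans eq_sort_iff'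

theorem sort_comp_of_strictMono {e : α → β} (he : StrictMono e) (f : Fin n → α) :
    sort (e ∘ f) = sort f := by
  refine sort_eq_iff_strictMono.2 fun i j hij ↦ ?_
  have := sort_eq_iff_strictMono.1 (rfl : sort f = sort f) hij
  simpa only [Prod.Lex.toLex_lt_toLex, Function.comp_apply, he.lt_iff_lt, he.injective.eq_iff]
    using this

-- Correctness of radix sort.
theorem sort_toLex (f : Fin n → α) (g : Fin n → β) :
    sort (fun i ↦ toLex (g i, f i)) = sort f * sort (g ∘ sort f) := by
  refine sort_eq_iff_strictMono.2 fun i j hij ↦ ?_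
  obtain hg | ⟨hg, hρ⟩ := Prod.Lex.toLex_lt_toLex.1 <|
    sort_eq_iff_strictMono.1 (rfl : sort (g ∘ sort f) = _) hij
  · exact Prod.Lex.toLex_lt_toLex.2 <| .inl <| Prod.Lex.toLex_lt_toLex.2 <| .inl hg
  · have hf := sort_eq_iff_strictMono.1 (rfl : sort f = _) hρ
    simp only [Equiv.Perm.coe_mul, Function.comp_apply] at hg ⊢
    simpa only [Prod.Lex.toLex_lt_toLex, hg, toLex_inj, Prod.mk.injEq, true_and,
      lt_self_iff_false, false_or] using hf

end Tuple

section Descents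

variable {N : ℕ} {α : Type*} [LinearOrder α]

def Equiv.Perm.descents (σ : Equiv.Perm (Fin (N + 1))) : Finset (Fin N) :=
  {c | σ c.succ < σ c.castSucc}

@[simp]
theorem Equiv.Perm.mem_descents {σ : Equiv.Perm (Fin (N + 1))} {c : Fin N} :
    c ∈ σ.descents ↔ σ c.succ < σ c.castSucc := by
  simp [Equiv.Perm.descents]

def MonotoneStrictAt (D : Finset (Fin N)) (v : Fin (N + 1) → α) : Prop :=
  ∀ c, v c.castSucc ≤ v c.succ ∧ (c ∈ D → v c.castSucc < v c.succ)

theorem Tuple.sort_eq_iff_monotoneStrictAt {f : Fin (N + 1) → α}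
    {σ : Equiv.Perm (Fin (N + 1))} :
    Tuple.sort f = σ ↔ MonotoneStrictAt σ.descents (f ∘ σ) := by
  rw [Tuple.sort_eq_iff_strictMono, Fin.strictMono_iff_lt_succ]
  refine forall_congr' fun c ↦ ?_
  have hne : σ c.castSucc ≠ σ c.succ := σ.injective.ne (Fin.castSucc_lt_succ (i := c)).ne
  simp only [Prod.Lex.toLex_lt_toLex, Equiv.Perm.mem_descents, Function.comp_apply]
  constructor
  · rintro (h | ⟨h, h'⟩)
    · exact ⟨h.le, fun _ ↦ h⟩
    · exact ⟨h.le, fun h'' ↦ absurd h' (not_lt.2 h''.le)⟩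
  · rintro ⟨h, h'⟩
    rcases h.lt_or_eq with h | h
    · exact .inl h
    · exact .inr ⟨h, lt_of_le_of_ne (not_lt.1 fun hd ↦ (h' hd).ne h) hne⟩

end Descents

section Counting

variable {N : ℕ} (D : Finset (Fin N))

def weakStepsBefore (j : ℕ) : ℕ := #{c ∈ Dᶜ | c.val < j}

theorem weakStepsBefore_succ (c : Fin N) :
    weakStepsBefore D (c + 1) = weakStepsBefore D c + if c ∈ D then 0 else 1 := by
  have hsplit : {x ∈ Dᶜ | x.val < c.val + 1} = {x ∈ Dᶜ | x.val < c.val} ∪ {x ∈ Dᶜ | x = c} := by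
    ext x
    simp only [mem_filter, mem_union, Nat.lt_succ_iff_lt_or_eq, Fin.ext_iff]
    tauto
  rw [weakStepsBefore, hsplit,
    card_union_of_disjoint (disjoint_filter.2 fun x _ h ↦ h.ne ∘ congrArg Fin.val), filter_eq',
    weakStepsBefore]
  by_cases hc : c ∈ D <;> simp [hc]

theorem weakStepsBefore_le (j : ℕ) : weakStepsBefore D j ≤ N - #D :=
  (card_filter_le _ _).trans (by rw [card_compl, Fintype.card_fin])

theorem weakStepsBefore_of_le {j : ℕ} (hj : N ≤ j) : weakStepsBefore D j = N - #D := by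
  rw [weakStepsBefore, filter_true_of_mem fun c _ ↦ c.2.trans_le hj, card_compl, Fintype.card_fin]

variable {D}

theorem weakStepsBefore_le_of_strictMono {M : ℕ} {e : Fin (N + 1) → Fin M} (he : StrictMono e)
    (i : Fin (N + 1)) : weakStepsBefore D i ≤ e i := by
  induction i using Fin.induction with
  | zero => simp [weakStepsBefore]
  | succ c ih =>
    have hstep := weakStepsBefore_succ D c
    have hlt : e c.castSucc < e c.succ := he Fin.castSucc_lt_succ
    simp only [Fin.val_castSucc, Fin.val_succ, Fin.lt_def] at ih hlt ⊢
    split_ifs at hstep <;> omega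

theorem monotone_sub_weakStepsBefore {M : ℕ} {e : Fin (N + 1) → Fin M} (he : StrictMono e) :
    Monotone fun i ↦ (e i : ℕ) - weakStepsBefore D i := by
  refine Fin.monotone_iff_le_succ.2 fun c ↦ ?_
  have hstep := weakStepsBefore_succ D c
  have hlt : e c.castSucc < e c.succ := he Fin.castSucc_lt_succ
  simp only [Fin.val_castSucc, Fin.val_succ, Fin.lt_def] at hlt ⊢
  split_ifs at hstep <;> omega

variable (D) in
-- Adding `weakStepsBefore D i` at position `i` turns the weak increases into strict ones.
def monotoneStrictAtEquiv (m : ℕ) :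
    {v : Fin (N + 1) → Fin m // MonotoneStrictAt D v} ≃ (Fin (N + 1) ↪o Fin (m + N - #D)) where
  toFun v := OrderEmbedding.ofStrictMono
    (fun i ↦ ⟨v.1 i + weakStepsBefore D i, by
      have := weakStepsBefore_le D i
      have := D.card_le_univ.trans_eq (Fintype.card_fin N)
      omega⟩)
    (Fin.strictMono_iff_lt_succ.2 fun c ↦ by
      have hstep := weakStepsBefore_succ D c
      have hv := v.2 c
      simp only [Fin.le_def, Fin.lt_def, Fin.val_castSucc, Fin.val_succ] at hv hstep ⊢
      split_ifs at hstep with hc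
      · have := hv.2 hc; omega
      · omega)
  invFun e := ⟨fun i ↦ ⟨e i - weakStepsBefore D i, by
      have hmono : (e i : ℕ) - weakStepsBefore D i ≤ e (Fin.last N) - weakStepsBefore D N :=
        monotone_sub_weakStepsBefore e.strictMono (Fin.le_last i)
      have hlast := weakStepsBefore_of_le D (le_refl N)
      have hle := weakStepsBefore_le_of_strictMono (D := D) e.strictMono (Fin.last N)
      have := (e (Fin.last N)).2
      simp only [Fin.val_last] at hle
      omega⟩, fun c ↦ by
      have hstep := weakStepsBefore_succ D c
      have hle := weakStepsBefore_le_of_strictMono (D := D) e.strictMono c.castSucc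
      have hlt : e c.castSucc < e c.succ := e.strictMono Fin.castSucc_lt_succ
      simp only [Fin.le_def, Fin.lt_def, Fin.val_castSucc, Fin.val_succ] at hle hlt hstep ⊢
      refine ⟨?_, fun hc ↦ ?_⟩ <;> split_ifs at hstep <;> omega⟩
  left_inv v := by ext; simp
  right_inv e := by
    ext i
    have := weakStepsBefore_le_of_strictMono (D := D) e.strictMono i
    simp only [OrderEmbedding.coe_ofStrictMono]
    omega

theorem card_monotoneStrictAt (m : ℕ) :
    Nat.card {v : Fin (N + 1) → Fin m // MonotoneStrictAt D v} = (m + N - #D).choose (N + 1) := by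
  rw [Nat.card_congr ((monotoneStrictAtEquiv D m).trans Set.powersetCard.ofFinEmbEquiv),
    Set.powersetCard.card, Nat.card_fin]

end Counting

theorem pval_val_add_one {n : ℕ} (σ : Equiv.Perm (Fin n)) (i : Fin n) :
    pval σ (i + 1) = σ i + 1 := by
  simp [pval]

theorem des_eq_card_descents {N : ℕ} (σ : Equiv.Perm (Fin (N + 1))) : des σ = #σ.descents := by
  have hval (c : Fin N) : pval σ (c + 1 + 1) < pval σ (c + 1) ↔ c ∈ σ.descents := by
    rw [show (c : ℕ) + 1 + 1 = c.succ + 1 from rfl, show (c : ℕ) + 1 = c.castSucc + 1 from rfl,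
      pval_val_add_one, pval_val_add_one]
    simp only [Equiv.Perm.mem_descents, add_lt_add_iff_right, Fin.val_fin_lt]
  refine (card_bij (fun c _ ↦ c.val + 1) (fun c hc ↦ ?_) (fun c _ c' _ h ↦ ?_) fun i hi ↦ ?_).symm
  · simp only [mem_filter, mem_Icc, hval, hc, and_true]
    omega
  · simpa [Fin.ext_iff] using h
  · simp only [mem_filter, mem_Icc] at hi
    obtain ⟨c, rfl⟩ : ∃ c : Fin N, i = c + 1 := ⟨⟨i - 1, by omega⟩, by simp; omega⟩
    exact ⟨c, (hval c).1 hi.2, rfl⟩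

theorem card_sort_eq_choose (m : ℕ) {n : ℕ} (σ : Equiv.Perm (Fin n)) :
    Nat.card {f : Fin n → Fin m // Tuple.sort f = σ} = (m + n - des σ - 1).choose n := by
  cases n with
  | zero => simp [Subsingleton.elim _ σ]
  | succ N =>
    rw [Nat.card_congr ((σ.symm.arrowCongr (Equiv.refl _)).subtypeEquiv
      fun f ↦ Tuple.sort_eq_iff_monotoneStrictAt), card_monotoneStrictAt, des_eq_card_descents]
    congr 1
    omega

theorem strictMono_finProdFinEquiv_ofLex {m n : ℕ} :
    StrictMono fun p : Fin m ×ₗ Fin n ↦ finProdFinEquiv (ofLex p) := by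
  intro p q h
  simp only [Fin.lt_def, finProdFinEquiv_apply_val]
  obtain h | ⟨h, h'⟩ := Prod.Lex.lt_iff.1 h
  · have : n * ((ofLex p).1 + 1) ≤ n * (ofLex q).1 := Nat.mul_le_mul_left n h
    have := (ofLex p).2.2
    nlinarith
  · rw [h]
    exact Nat.add_lt_add_right h' _

-- `(A, B) ↦ fun i ↦ k * B ((sort A)⁻¹ i) + A i`
def radixEquiv (n k l : ℕ) : (Fin n → Fin k) × (Fin n → Fin l) ≃ (Fin n → Fin (k * l)) :=
  (Equiv.prodShear (Equiv.refl _) fun A ↦ (Tuple.sort A).arrowCongr (Equiv.refl _)).trans <|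
    (Equiv.prodComm _ _).trans <| (Equiv.arrowProdEquivProdArrow _ _ _).symm.trans <|
      (Equiv.refl _).arrowCongr (finProdFinEquiv.trans (finCongr (Nat.mul_comm l k)))

theorem sort_radixEquiv {n k l : ℕ} (p : (Fin n → Fin k) × (Fin n → Fin l)) :
    Tuple.sort (radixEquiv n k l p) = Tuple.sort p.1 * Tuple.sort p.2 := by
  obtain ⟨A, B⟩ := p
  set enc := fun x : Fin l ×ₗ Fin k ↦ finCongr (Nat.mul_comm l k) (finProdFinEquiv (ofLex x))
  have henc : StrictMono enc := StrictMono.comp (fun _ _ h ↦ h) strictMono_finProdFinEquiv_ofLex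
  have : radixEquiv n k l (A, B) = enc ∘ fun i ↦ toLex ((B ∘ (Tuple.sort A).symm) i, A i) := rfl
  rw [this, Tuple.sort_comp_of_strictMono henc, Tuple.sort_toLex]
  congr 2
  ext i
  simp

theorem card_mul_eq_sum_card_mul {G X Y : Type*} [Group G] [Fintype G] [Finite X] [Finite Y]
    (a : X → G) (b : Y → G) (π : G) :
    Nat.card {p : X × Y // a p.1 * b p.2 = π} =
      ∑ σ, Nat.card {x // a x = σ} * Nat.card {y // b y = σ⁻¹ * π} := by
  let e : {p : X × Y // a p.1 * b p.2 = π} ≃ Σ σ, {x // a x = σ} × {y // b y = σ⁻¹ * π} :=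
    { toFun p := ⟨a p.1.1, ⟨p.1.1, rfl⟩, ⟨p.1.2, eq_inv_mul_of_mul_eq p.2⟩⟩
      invFun s := ⟨(s.2.1, s.2.2), by rw [s.2.1.2, s.2.2.2, mul_inv_cancel_left]⟩
      left_inv _ := rfl
      right_inv := by rintro ⟨σ, ⟨x, rfl⟩, y, hy⟩; rfl }
  rw [Nat.card_congr e, Nat.card_sigma]
  simp only [Nat.card_prod]

theorem stmt0_general (n k l : ℕ) (π : Equiv.Perm (Fin n)) :
    Nat.choose (k * l + n - des π - 1) n =
      ∑ σ : Equiv.Perm (Fin n),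
        Nat.choose (k + n - des σ - 1) n * Nat.choose (l + n - des (σ⁻¹ * π) - 1) n := by
  simp only [← card_sort_eq_choose]
  rw [← Nat.card_congr ((radixEquiv n k l).subtypeEquiv fun p ↦ by rw [sort_radixEquiv])]
  exact card_mul_eq_sum_card_mul _ _ π

theorem stmt0 (n k l : ℕ) (hk : 0 < k) (hl : 0 < l) (π : Equiv.Perm (Fin n)) :
    Nat.choose (k * l + n - des π - 1) n =
      ∑ σ : Equiv.Perm (Fin n),
        Nat.choose (k + n - des σ - 1) n * Nat.choose (l + n - des (σ⁻¹ * π) - 1) n :=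
  stmt0_general n k l π
end

section
/- The numbers l(n,k) of permutations of {1,...,n} with exactly k left peaks satisfy the recurrence l(n,k) = (2k+1)·l(n-1,k) + (n+1-2k)·l(n-1,k-1) for n ≥ 2 and k ≥ 1, with l(n,0) = 1 for all n ≥ 1. -/
/-- `lcount n k` is the number of permutations of `{1,…,n}` with exactly `k` left peaks. -/
def lcount (n k : ℕ) : ℕ :=
  (Finset.univ.filter (fun π : Equiv.Perm (Fin n) => lpk π = k)).card


/-!
Every permutation of `Fin (m + 1)` is obtained in exactly one way by inserting the largest value
into a permutation `σ` of `Fin m`. Inserting it at the end, or immediately before or after a left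
peak of `σ`, does not change the number of left peaks (the new maximum replaces the neighbouring
peak, or is not counted at the last position); everywhere else it adds one left peak. Left peaks
are never adjacent and never at the last position, so if `σ` has `k` left peaks there are `2k + 1`
positions of the first kind and `m - 2k` of the second. Summing over `σ` gives the recurrence, and
for `k = 0` it gives `l(m + 1, 0) = l(m, 0)`, whence `l(n, 0) = 1`.
-/

open Finset

section InsertMax

variable {m n : ℕ}

/-- Inserts the new largest value `m` (of `Fin (m + 1)`) at the `0`-indexed position `p`, which is
the `1`-indexed position `p + 1` seen by `pval`. -/
def insertMax (σ : Equiv.Perm (Fin m)) (p : Fin (m + 1)) : Equiv.Perm (Fin (m + 1)) :=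
  (finSuccEquiv' p).trans ((Equiv.optionCongr σ).trans (finSuccEquiv' (Fin.last m)).symm)

lemma insertMax_apply_self (σ : Equiv.Perm (Fin m)) (p : Fin (m + 1)) :
    insertMax σ p p = Fin.last m := by
  simp [insertMax]

lemma insertMax_apply_succAbove (σ : Equiv.Perm (Fin m)) (p : Fin (m + 1)) (j : Fin m) :
    insertMax σ p (p.succAbove j) = (σ j).castSucc := by
  simp [insertMax, finSuccEquiv'_succAbove, finSuccEquiv'_symm_some]

lemma pval_le (π : Equiv.Perm (Fin n)) (j : ℕ) : pval π j ≤ n := by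
  unfold pval; split
  · have := (π ⟨j - 1, by omega⟩).isLt; omega
  · omega

lemma pval_eq_zero (π : Equiv.Perm (Fin n)) {j : ℕ} (h : ¬(1 ≤ j ∧ j ≤ n)) :
    pval π j = 0 :=
  dif_neg h

lemma pval_insertMax (σ : Equiv.Perm (Fin m)) (p : Fin (m + 1)) (j : ℕ) :
    pval (insertMax σ p) j =
      if j ≤ p then pval σ j else if j = p + 1 then m + 1 else pval σ (j - 1) := by
  have hp := p.isLt
  by_cases hj : 1 ≤ j ∧ j ≤ m + 1
  · simp only [pval, dif_pos hj]
    split_ifs <;> try omega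
    · have : (⟨j - 1, by omega⟩ : Fin (m + 1)) = p.succAbove ⟨j - 1, by omega⟩ := by
        rw [Fin.succAbove_of_castSucc_lt _ _ (by simp [Fin.lt_def]; omega)]; rfl
      simp [this, insertMax_apply_succAbove]
    · have : (⟨j - 1, by omega⟩ : Fin (m + 1)) = p := by ext; simp; omega
      simp [this, insertMax_apply_self]
    · have : (⟨j - 1, by omega⟩ : Fin (m + 1)) = p.succAbove ⟨j - 1 - 1, by omega⟩ := by
        rw [Fin.succAbove_of_le_castSucc _ _ (by simp [Fin.le_def]; omega)]; ext; simp; omega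
      simp [this, insertMax_apply_succAbove]
  · rw [pval_eq_zero _ hj]
    split_ifs <;> first | omega | exact (pval_eq_zero _ (by omega)).symm

def leftPeaks (π : Equiv.Perm (Fin n)) : Finset ℕ :=
  {i ∈ Icc 1 (n - 1) | pval π (i - 1) < pval π i ∧ pval π (i + 1) < pval π i}

lemma lpk_eq_card_leftPeaks (π : Equiv.Perm (Fin n)) : lpk π = #(leftPeaks π) := rfl

lemma mem_leftPeaks {π : Equiv.Perm (Fin n)} {i : ℕ} :
    i ∈ leftPeaks π ↔
      (1 ≤ i ∧ i ≤ n - 1) ∧ pval π (i - 1) < pval π i ∧ pval π (i + 1) < pval π i := by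
  simp [leftPeaks, and_assoc]

lemma succ_notMem_leftPeaks {π : Equiv.Perm (Fin n)} {i : ℕ} (hi : i ∈ leftPeaks π) :
    i + 1 ∉ leftPeaks π := by
  rw [mem_leftPeaks] at hi ⊢
  simp only [Nat.add_sub_cancel]
  omega

lemma mem_leftPeaks_insertMax (σ : Equiv.Perm (Fin m)) (p : Fin (m + 1)) (i : ℕ) :
    i ∈ leftPeaks (insertMax σ p) ↔
      (i = p + 1 ∧ (p : ℕ) < m) ∨ (i < p ∧ i ∈ leftPeaks σ) ∨
        (p + 3 ≤ i ∧ i - 1 ∈ leftPeaks σ) := by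
  have := pval_le σ (i - 1)
  have := pval_le σ i
  have := pval_le σ (i + 1)
  rcases i with _ | i
  · simp [mem_leftPeaks]
  simp only [mem_leftPeaks, pval_insertMax, Nat.add_sub_cancel] at *
  split_ifs <;> omega

lemma leftPeaks_insertMax_last (σ : Equiv.Perm (Fin m)) :
    leftPeaks (insertMax σ (Fin.last m)) = leftPeaks σ := by
  ext i
  rw [mem_leftPeaks_insertMax, Fin.val_last]
  constructor
  · rintro (⟨-, h⟩ | ⟨-, h⟩ | ⟨hi, h⟩)
    · omega
    · exact h
    · have := (mem_leftPeaks.mp h).1; omega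
  · intro h
    have := (mem_leftPeaks.mp h).1
    exact Or.inr (Or.inl ⟨by omega, h⟩)

lemma leftPeaks_insertMax_of_lt (σ : Equiv.Perm (Fin m)) {p : Fin (m + 1)} (hp : (p : ℕ) < m) :
    leftPeaks (insertMax σ p) = insert ((p : ℕ) + 1)
      ({j ∈ leftPeaks σ | j ≠ (p : ℕ) ∧ j ≠ (p : ℕ) + 1}.image
        fun j => if j < (p : ℕ) then j else j + 1) := by
  ext i
  simp only [mem_insert, mem_image, mem_filter, mem_leftPeaks_insertMax]
  constructor
  · rintro (⟨rfl, -⟩ | ⟨hi, h⟩ | ⟨hi, h⟩)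
    · exact Or.inl rfl
    · exact Or.inr ⟨i, ⟨h, by omega, by omega⟩, if_pos hi⟩
    · exact Or.inr ⟨i - 1, ⟨h, by omega, by omega⟩, by rw [if_neg (by omega)]; omega⟩
  · rintro (rfl | ⟨j, ⟨h, hjp, hjp'⟩, rfl⟩)
    · exact Or.inl ⟨rfl, hp⟩
    · split_ifs with hj
      · exact Or.inr (Or.inl ⟨hj, h⟩)
      · exact Or.inr (Or.inr ⟨by omega, by simpa using h⟩)

lemma card_filter_ne_and_ne_succ {s : Finset ℕ} (hs : ∀ i ∈ s, i + 1 ∉ s) (a : ℕ) :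
    #{j ∈ s | j ≠ a ∧ j ≠ a + 1} = if a ∈ s ∨ a + 1 ∈ s then #s - 1 else #s := by
  have hfilter : {j ∈ s | j ≠ a ∧ j ≠ a + 1} = (s.erase a).erase (a + 1) := by
    ext j; simp only [mem_filter, mem_erase]; tauto
  rw [hfilter, card_erase_eq_ite, card_erase_eq_ite]
  by_cases ha : a ∈ s
  · simp [ha, hs a ha]
  · simp [ha]

lemma card_union_image_pred {s : Finset ℕ} (hs : ∀ i ∈ s, i + 1 ∉ s) (hpos : ∀ i ∈ s, 1 ≤ i) :
    #(s ∪ s.image (· - 1)) = 2 * #s := by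
  have hdisj : Disjoint s (s.image (· - 1)) := by
    rw [disjoint_left]
    intro j hj hj'
    obtain ⟨i, hi, rfl⟩ := mem_image.mp hj'
    rw [← Nat.sub_add_cancel (hpos i hi)] at hi
    exact hs _ hj hi
  rw [card_union_of_disjoint hdisj, card_image_of_injOn, two_mul]
  intro a ha b hb hab
  have := hpos a ha; have := hpos b hb
  simp only at hab; omega

/-- The positions at which inserting the maximum creates no new left peak: the last one, and the
two sides of every left peak. -/
def absorbing (σ : Equiv.Perm (Fin m)) : Finset ℕ :=
  insert m (leftPeaks σ ∪ (leftPeaks σ).image (· - 1))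

lemma mem_absorbing {σ : Equiv.Perm (Fin m)} {x : ℕ} :
    x ∈ absorbing σ ↔ x = m ∨ x ∈ leftPeaks σ ∨ x + 1 ∈ leftPeaks σ := by
  simp only [absorbing, mem_insert, mem_union, mem_image]
  refine or_congr_right (or_congr_right ⟨?_, fun h => ⟨x + 1, h, rfl⟩⟩)
  rintro ⟨i, hi, rfl⟩
  rwa [Nat.sub_add_cancel (mem_leftPeaks.mp hi).1.1]

lemma lt_of_mem_absorbing {σ : Equiv.Perm (Fin m)} {x : ℕ} (hx : x ∈ absorbing σ) :
    x < m + 1 := by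
  rcases mem_absorbing.mp hx with h | h | h
  · omega
  · have := (mem_leftPeaks.mp h).1; omega
  · have := (mem_leftPeaks.mp h).1; omega

lemma card_absorbing (σ : Equiv.Perm (Fin m)) : #(absorbing σ) = 2 * lpk σ + 1 := by
  have bounds : ∀ i ∈ leftPeaks σ, 1 ≤ i ∧ i ≤ m - 1 := fun i hi => (mem_leftPeaks.mp hi).1
  have hm : m ∉ leftPeaks σ ∪ (leftPeaks σ).image (· - 1) := by
    rw [mem_union, mem_image]
    rintro (h | ⟨i, hi, hi'⟩)
    · have := bounds m h; omega
    · have := bounds i hi; omega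
  rw [absorbing, card_insert_of_notMem hm,
    card_union_image_pred (fun _ => succ_notMem_leftPeaks) fun i hi => (bounds i hi).1,
    lpk_eq_card_leftPeaks]

lemma lpk_insertMax (σ : Equiv.Perm (Fin m)) (p : Fin (m + 1)) :
    lpk (insertMax σ p) = if (p : ℕ) ∈ absorbing σ then lpk σ else lpk σ + 1 := by
  rcases (Nat.lt_succ_iff.mp p.isLt).eq_or_lt with hp | hp
  · obtain rfl : p = Fin.last m := Fin.ext hp
    rw [if_pos (mem_absorbing.mpr (Or.inl hp)), lpk_eq_card_leftPeaks, leftPeaks_insertMax_last,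
      lpk_eq_card_leftPeaks]
  have hinj : Function.Injective fun j => if j < (p : ℕ) then j else j + 1 := by
    intro a b h; simp only at h; split_ifs at h <;> omega
  have hnot : (p : ℕ) + 1 ∉ {j ∈ leftPeaks σ | j ≠ (p : ℕ) ∧ j ≠ (p : ℕ) + 1}.image
      fun j => if j < (p : ℕ) then j else j + 1 := by
    simp only [mem_image, mem_filter, not_exists, not_and]
    rintro j ⟨-, hjp, hjp'⟩ h; split_ifs at h <;> omega
  rw [lpk_eq_card_leftPeaks, leftPeaks_insertMax_of_lt σ hp, card_insert_of_notMem hnot,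
    card_image_of_injective _ hinj, card_filter_ne_and_ne_succ (fun _ => succ_notMem_leftPeaks),
    lpk_eq_card_leftPeaks]
  simp only [mem_absorbing, hp.ne, false_or]
  split_ifs with h
  · obtain ⟨i, hi⟩ : (leftPeaks σ).Nonempty := by rcases h with h | h <;> exact ⟨_, h⟩
    have := card_pos.mpr ⟨i, hi⟩
    omega
  · omega

lemma card_filter_val_mem {S : Finset ℕ} (hS : ∀ x ∈ S, x < n) :
    #{p : Fin n | (p : ℕ) ∈ S} = #S := by
  rw [← card_map Fin.valEmbedding]
  congr 1
  ext x
  simp only [mem_map, mem_filter, mem_univ, true_and, Fin.valEmbedding_apply]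
  exact ⟨by rintro ⟨p, hp, rfl⟩; exact hp, fun hx => ⟨⟨x, hS x hx⟩, hx, rfl⟩⟩

lemma card_filter_ite_eq {α : Type*} [Fintype α] (c : α → Prop) [DecidablePred c] (l k : ℕ) :
    #{x | (if c x then l else l + 1) = k} =
      if l = k then #{x | c x} else if l + 1 = k then #{x | ¬c x} else 0 := by
  split_ifs with h₁ h₂
  · subst h₁; congr 1; ext x; by_cases hx : c x <;> simp [hx]
  · subst h₂; congr 1; ext x; by_cases hx : c x <;> simp [hx]
  · exact card_eq_zero.mpr (filter_eq_empty_iff.mpr fun x _ => by split_ifs <;> omega)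

lemma card_filter_lpk_insertMax (σ : Equiv.Perm (Fin m)) (k : ℕ) :
    #{p : Fin (m + 1) | lpk (insertMax σ p) = k} =
      if lpk σ = k then 2 * k + 1 else if lpk σ + 1 = k then m - 2 * lpk σ else 0 := by
  have hA : #{p : Fin (m + 1) | (p : ℕ) ∈ absorbing σ} = 2 * lpk σ + 1 := by
    rw [card_filter_val_mem fun _ => lt_of_mem_absorbing, card_absorbing]
  have hAc := card_filter_add_card_filter_not (s := (univ : Finset (Fin (m + 1))))
    fun p => (p : ℕ) ∈ absorbing σ
  simp only [lpk_insertMax, card_filter_ite_eq, card_univ, Fintype.card_fin] at hAc ⊢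
  split_ifs <;> omega

lemma insertMax_injective :
    Function.Injective fun x : Equiv.Perm (Fin m) × Fin (m + 1) => insertMax x.1 x.2 := by
  rintro ⟨σ, p⟩ ⟨σ', p'⟩ h
  simp only at h
  obtain rfl : p = p' := by
    rw [← (insertMax σ p).injective.eq_iff, insertMax_apply_self, h, insertMax_apply_self]
  refine Prod.ext (Equiv.ext fun j => Fin.castSucc_injective _ ?_) rfl
  rw [← insertMax_apply_succAbove, ← insertMax_apply_succAbove, h]

lemma insertMax_bijective :
    Function.Bijective fun x : Equiv.Perm (Fin m) × Fin (m + 1) => insertMax x.1 x.2 :=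
  (Fintype.bijective_iff_injective_and_card _).mpr
    ⟨insertMax_injective, by simp [Fintype.card_perm, Nat.factorial_succ, mul_comm]⟩

end InsertMax

lemma lcount_succ_eq_sum (m k : ℕ) :
    lcount (m + 1) k =
      ∑ σ : Equiv.Perm (Fin m), #{p : Fin (m + 1) | lpk (insertMax σ p) = k} := by
  rw [lcount, ← card_equiv (Equiv.ofBijective _ insertMax_bijective)
    (s := {x | lpk (insertMax x.1 x.2) = k}) (fun _ => by simp), card_filter,
    Fintype.sum_prod_type]
  simp only [card_filter]

lemma sum_ite_lpk_eq_mul_lcount (m k c : ℕ) :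
    ∑ σ : Equiv.Perm (Fin m), (if lpk σ = k then c else 0) = c * lcount m k := by
  rw [← sum_filter, sum_const, smul_eq_mul, mul_comm, lcount]

lemma lcount_succ_zero (m : ℕ) : lcount (m + 1) 0 = lcount m 0 := by
  simp_rw [lcount_succ_eq_sum, card_filter_lpk_insertMax, Nat.add_one_ne_zero, if_false]
  rw [sum_ite_lpk_eq_mul_lcount, mul_zero, zero_add, one_mul]

lemma lcount_succ_succ (m k : ℕ) :
    lcount (m + 1) (k + 1) = (2 * k + 3) * lcount m (k + 1) + (m - 2 * k) * lcount m k := by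
  rw [lcount_succ_eq_sum, ← sum_ite_lpk_eq_mul_lcount, ← sum_ite_lpk_eq_mul_lcount,
    ← sum_add_distrib]
  refine sum_congr rfl fun σ _ => ?_
  rw [card_filter_lpk_insertMax]
  split_ifs <;> omega

lemma lcount_zero_right (n : ℕ) : lcount n 0 = 1 := by
  induction n with
  | zero => decide
  | succ n ih => rw [lcount_succ_zero, ih]

theorem stmt5 :
    (∀ n k : ℕ, 2 ≤ n → 1 ≤ k →
        lcount n k =
          (2 * k + 1) * lcount (n - 1) k + (n + 1 - 2 * k) * lcount (n - 1) (k - 1)) ∧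
    ∀ n : ℕ, 1 ≤ n → lcount n 0 = 1 := by
  refine ⟨fun n k hn hk => ?_, fun n _ => lcount_zero_right n⟩
  obtain ⟨m, rfl⟩ : ∃ m, n = m + 1 := ⟨n - 1, by omega⟩
  obtain ⟨k, rfl⟩ : ∃ j, k = j + 1 := ⟨k - 1, by omega⟩
  rw [lcount_succ_succ, Nat.add_sub_cancel, Nat.add_sub_cancel,
    show m + 1 + 1 - 2 * (k + 1) = m - 2 * k by omega]
  ring
end

section
/- For fixed n and m, define op(n,k;m) = 4^k·Σ_{a≥0} C(n+m-a, n)·C(n-2k, a-k). Then op(n,k;m) ≥ op(n,k+1;m) for all k ≥ 0. -/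
/-- Binomial coefficient for integer arguments, with the convention that it is
zero when `b < 0` or `a < b`. -/
def zchoose (a b : ℤ) : ℤ :=
  if 0 ≤ b ∧ b ≤ a then ((a.toNat).choose b.toNat : ℤ) else 0

/-- The left-enriched order polynomial of a chain on `n` elements with `k` left
peaks, evaluated at `m`:  `4^k · Σ_{a≥0} C(n+m-a, n)·C(n-2k, a-k)`
(reindexed by `a = k + b`; terms with `b > n` vanish). -/
def opL (n k m : ℕ) : ℤ :=
  4 ^ k * ∑ b ∈ Finset.range (n + 1),
    zchoose ((n : ℤ) + m - (k + b)) n * zchoose ((n : ℤ) - 2 * k) b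

/-- The enriched order polynomial of a chain on `n` elements with `k` peaks,
evaluated at `m`: `2·4^k · Σ_{a≥0} C(n-1+m-a, n)·C(n-1-2k, a-k)`
(reindexed by `a = k + b`; terms with `b > n` vanish). -/
def opStar (n k m : ℕ) : ℤ :=
  2 * 4 ^ k * ∑ b ∈ Finset.range (n + 1),
    zchoose ((n : ℤ) - 1 + m - (k + b)) n * zchoose ((n : ℤ) - 1 - 2 * k) b

/-!
With `c = n - 2k - 2`, the Vandermonde step `C(c+2, b) = C(c, b) + 2 C(c, b-1) + C(c, b-2)` turns
`4^(-k) (op(n,k;m) - op(n,k+1;m))` into `Σ_b C(c, b) Δ²g(b)` with `g(b) = C(n+m-k-b, n)`. This is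
nonnegative because `x ↦ C(x, n)` is convex: its second difference is a first difference of the
monotone `x ↦ C(x, n-1)`. If `n < 2k + 2`, then `op(n,k+1;m) = 0`.
-/

lemma zchoose_natCast (a b : ℕ) : zchoose a b = a.choose b := by
  unfold zchoose
  split_ifs with h
  · simp
  · rw [Nat.choose_eq_zero_of_lt (by omega), Nat.cast_zero]

lemma zchoose_eq_zero_of_lt {a b : ℤ} (h : a < b) : zchoose a b = 0 :=
  if_neg (by omega)

lemma zchoose_eq_zero_of_neg (a : ℤ) {b : ℤ} (h : b < 0) : zchoose a b = 0 :=
  if_neg (by omega)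

lemma zchoose_nonneg (a b : ℤ) : 0 ≤ zchoose a b := by
  unfold zchoose; split <;> positivity

lemma zchoose_mono_left (b : ℤ) : Monotone (zchoose · b) := by
  intro a a' h
  by_cases hb : 0 ≤ b ∧ b ≤ a
  · simp only [zchoose, if_pos hb, if_pos (show 0 ≤ b ∧ b ≤ a' by omega)]
    exact_mod_cast Nat.choose_le_choose _ (by omega)
  · simp only [zchoose, if_neg hb]
    exact zchoose_nonneg a' b

lemma zchoose_succ_left (a : ℤ) {b : ℤ} (hb : b ≠ 0) :
    zchoose (a + 1) b = zchoose a b + zchoose a (b - 1) := by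
  rcases lt_or_gt_of_ne hb with hb | hb
  · simp only [zchoose_eq_zero_of_neg _ hb, zchoose_eq_zero_of_neg _ (by omega : b - 1 < 0),
      add_zero]
  rcases lt_or_ge a 0 with ha | ha
  · rw [zchoose_eq_zero_of_lt (by omega), zchoose_eq_zero_of_lt (by omega),
      zchoose_eq_zero_of_lt (by omega : a < b - 1), add_zero]
  lift a to ℕ using ha
  obtain ⟨q, rfl⟩ : ∃ q : ℕ, b = q + 1 := ⟨(b - 1).toNat, by omega⟩
  rw [add_sub_cancel_right, ← Nat.cast_succ, ← Nat.cast_succ]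
  simp only [zchoose_natCast, Nat.choose_succ_succ', Nat.cast_add]
  ring

lemma zchoose_second_difference_nonneg (a : ℤ) {b : ℤ} (hb : b ≠ 0) :
    0 ≤ zchoose (a + 2) b - 2 * zchoose (a + 1) b + zchoose a b := by
  have h₁ := zchoose_succ_left (a + 1) hb
  have h₂ := zchoose_succ_left a hb
  have hmono := zchoose_mono_left (b - 1) (by omega : a ≤ a + 1)
  rw [add_assoc, one_add_one_eq_two] at h₁
  simp only at hmono
  linarith

section BinomialSums

variable {R : Type*} [Semiring R]

lemma sum_range_mul_choose_of_lt (f : ℕ → R) {c L : ℕ} (h : c < L) :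
    ∑ b ∈ Finset.range L, f b * c.choose b = ∑ b ∈ Finset.range (c + 1), f b * c.choose b := by
  refine (Finset.sum_subset (Finset.range_subset_range.2 h) fun b _ hbc => ?_).symm
  rw [Finset.mem_range, not_lt] at hbc
  rw [Nat.choose_eq_zero_of_lt hbc, Nat.cast_zero, mul_zero]

lemma sum_range_mul_choose_succ (f : ℕ → R) (c : ℕ) :
    ∑ b ∈ Finset.range (c + 2), f b * (c + 1).choose b =
      ∑ b ∈ Finset.range (c + 1), (f b + f (b + 1)) * c.choose b := by
  simp only [add_mul, Finset.sum_add_distrib]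
  rw [← sum_range_mul_choose_of_lt f (by omega : c < c + 2), Finset.sum_range_succ',
    Finset.sum_range_succ' (fun b => f b * c.choose b)]
  simp only [Nat.choose_succ_succ', Nat.choose_zero_right, Nat.cast_add, mul_add,
    Finset.sum_add_distrib]
  abel

end BinomialSums

lemma sum_range_mul_choose_four_le {R : Type*} [CommRing R] [PartialOrder R] [IsOrderedRing R]
    (g : ℕ → R) (hg : ∀ b, 0 ≤ g b - 2 * g (b + 1) + g (b + 2)) (c : ℕ) :
    ∑ b ∈ Finset.range (c + 1), 4 * g (b + 1) * c.choose b ≤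
      ∑ b ∈ Finset.range (c + 3), g b * (c + 2).choose b := by
  rw [sum_range_mul_choose_succ, sum_range_mul_choose_succ, ← sub_nonneg,
    ← Finset.sum_sub_distrib]
  refine Finset.sum_nonneg fun b _ => ?_
  rw [← sub_mul]
  exact mul_nonneg (by convert hg b using 1; ring) (Nat.cast_nonneg _)

lemma opL_nonneg (n k m : ℕ) : 0 ≤ opL n k m :=
  mul_nonneg (by positivity) <| Finset.sum_nonneg fun _ _ =>
    mul_nonneg (zchoose_nonneg _ _) (zchoose_nonneg _ _)

lemma opL_eq_zero_of_lt {n k : ℕ} (m : ℕ) (h : n < 2 * k) : opL n k m = 0 := by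
  refine mul_eq_zero_of_right _ <| Finset.sum_eq_zero fun b _ => ?_
  rw [zchoose_eq_zero_of_lt (a := (n : ℤ) - 2 * k) (by omega), mul_zero]

lemma opL_eq_sum_range_choose {n k c : ℕ} (m : ℕ) (h : n = 2 * k + c) :
    opL n k m = 4 ^ k * ∑ b ∈ Finset.range (c + 1),
      zchoose ((n : ℤ) + m - (k + b)) n * c.choose b := by
  have hc : (n : ℤ) - 2 * k = c := by omega
  rw [opL, hc, ← sum_range_mul_choose_of_lt _ (by omega : c < n + 1)]
  simp only [zchoose_natCast]

theorem stmt12 (n m k : ℕ) : opL n (k + 1) m ≤ opL n k m := by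
  obtain hn | ⟨c, hn⟩ : n < 2 * (k + 1) ∨ ∃ c, n = 2 * (k + 1) + c :=
    (lt_or_ge _ _).imp_right Nat.exists_eq_add_of_le
  · rw [opL_eq_zero_of_lt m hn]
    exact opL_nonneg n k m
  set g : ℕ → ℤ := fun b => zchoose ((n : ℤ) + m - (k + b)) n
  have hconvex (b : ℕ) : 0 ≤ g b - 2 * g (b + 1) + g (b + 2) := by
    have := zchoose_second_difference_nonneg ((n : ℤ) + m - (k + b + 2)) (b := n) (by omega)
    simp only [g]
    push_cast
    ring_nf at this ⊢
    exact this
  rw [opL_eq_sum_range_choose m hn, opL_eq_sum_range_choose m (by omega : n = 2 * k + (c + 2)),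
    pow_succ, mul_assoc, Finset.mul_sum]
  refine mul_le_mul_of_nonneg_left ?_ (by positivity)
  convert sum_range_mul_choose_four_le g hconvex c using 2 with b
  rw [show (n : ℤ) + m - ((k + 1 : ℕ) + b) = n + m - (k + (b + 1 : ℕ)) by push_cast; ring]
  ring
end
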